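/- arXiv:2107.07819 — 2 statements merged into one kernel-verified Lean document; each statement's English description precedes it below -/
import Mathlib

section
/- Let A be a complex *-algebra that is algebraic and whose involution is proper. Then A is a weakly Rickart *-ring: for every a ∈ A there exists a projection e ∈ A such that ae = a and such that for every y ∈ A, ay = 0 implies ey = 0. -/
/-- A (possibly non-unital) complex algebra is *algebraic* if every element generates a
finite-dimensional subalgebra (equivalently, every element is a root of a nonzero
polynomial with complex coefficients). -/
def IsAlgebraicAlgebra (A : Type*) [NonUnitalRing A] [Module ℂ A] : Prop :=
  ∀ a : A, ∃ S : NonUnitalSubalgebra ℂ A, a ∈ S ∧ FiniteDimensional ℂ S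

/-- A pre-C*-norm on a complex `*`-algebra: a submultiplicative norm `σ` with
`σ (x* x) = σ x ^ 2`. -/
def HasPreCstarNorm (A : Type*) [NonUnitalRing A] [Module ℂ A] [Star A] : Prop :=
  ∃ σ : A → ℝ,
    (∀ a : A, σ a = 0 ↔ a = 0) ∧
    (∀ (c : ℂ) (a : A), σ (c • a) = ‖c‖ * σ a) ∧
    (∀ a b : A, σ (a + b) ≤ σ a + σ b) ∧
    (∀ a b : A, σ (a * b) ≤ σ a * σ b) ∧
    (∀ a : A, σ (star a * a) = σ a ^ 2)

/-- The involution is proper if `a* a = 0` implies `a = 0`. -/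
def HasProperInvolution (A : Type*) [NonUnitalRing A] [Star A] : Prop :=
  ∀ a : A, star a * a = 0 → a = 0

/-- Hermitian: every selfadjoint element has real spectrum (computed in the
unitization `ℂ ⊕ A`). -/
def IsHermitianStarAlgebra (A : Type*) [NonUnitalRing A] [Module ℂ A]
    [SMulCommClass ℂ A A] [IsScalarTower ℂ A A] [Star A] : Prop :=
  ∀ a : A, star a = a → ∀ z ∈ spectrum ℂ (a : Unitization ℂ A), z.im = 0

/-- Semisimple: the Jacobson radical is `{0}` (expressed via the unitization, whose
Jacobson radical meets `A` exactly in the Jacobson radical of `A`). -/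
def IsSemisimpleAlgebra (A : Type*) [NonUnitalRing A] [Module ℂ A]
    [SMulCommClass ℂ A A] [IsScalarTower ℂ A A] : Prop :=
  ∀ a : A, (a : Unitization ℂ A) ∈ (⊥ : Ideal (Unitization ℂ A)).jacobson → a = 0

/-! Put `h = a⋆a` in the unitization. Algebraicity makes `h` integral, and its minimal
polynomial `μ` vanishes at `0` since `h` has no scalar part. Properness forbids `X² ∣ μ`: if
`μ = X² w`, then `r = X w` satisfies `r(h)⋆ r(h) = (μ w̄)(h) = 0`, so `r(h) = 0`, contradicting
minimality. Hence `μ = X g` with `X` and `g` coprime, and a Bézout identity `u X + v g = 1`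
gives the idempotent `f = (u X)(h)` with `h f = h`. As `f⋆` is again a polynomial in `h`,
`e = f⋆ f` is a projection, still of the form `p(h) h`. Finally `a e = a` because
`(a - a e)⋆ (a - a e) = h - h e - e h + e h e = 0`, and `a y = 0` forces `h y = 0`, so `e y = 0`.
-/

open Polynomial

namespace Unitization

variable {R A : Type*}

theorem fst_aeval_inr [CommRing R] [NonUnitalRing A] [Module R A] [SMulCommClass R A A]
    [IsScalarTower R A A] (a : A) (p : R[X]) :
    (aeval (a : Unitization R A) p).fst = p.coeff 0 := by
  rw [← fstHom_apply, ← aeval_algHom_apply, fstHom_apply, fst_inr, coeff_zero_eq_aeval_zero]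

theorem X_dvd_minpoly_inr [Field R] [NonUnitalRing A] [Module R A] [SMulCommClass R A A]
    [IsScalarTower R A A] (a : A) : X ∣ minpoly R (a : Unitization R A) := by
  rw [X_dvd_iff, ← fst_aeval_inr (R := R) a, minpoly.aeval, fst_zero]

theorem isIntegral_inr [Field R] [NonUnitalRing A] [Module R A] [SMulCommClass R A A]
    [IsScalarTower R A A] {S : NonUnitalSubalgebra R A} [FiniteDimensional R S] {a : A}
    (ha : a ∈ S) : IsIntegral R (a : Unitization R A) := by
  have : Module.Finite R (Unitization R S) := .equiv (linearEquiv R R S).symm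
  simpa using (IsIntegral.of_finite R ((⟨a, ha⟩ : S) : Unitization R S)).map
    (lift ((inrNonUnitalAlgHom R A).comp (NonUnitalSubalgebraClass.subtype S)))

theorem hasProperInvolution [CommRing R] [StarRing R] [NonUnitalRing A] [StarRing A]
    [Module R A] [SMulCommClass R A A] [IsScalarTower R A A] (hR : HasProperInvolution R)
    (hA : HasProperInvolution A) :
    HasProperInvolution (Unitization R A) := by
  intro x hx
  lift x to A using hR _ (by rw [← fst_star, ← fst_mul, hx, fst_zero]) with b
  rw [← inr_star, ← inr_mul] at hx
  rw [hA b (inr_injective (hx.trans (inr_zero R).symm)), inr_zero]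

end Unitization

theorem HasProperInvolution.mul_eq_self_of_star_mul_self_mul {R : Type*} [NonUnitalRing R]
    [StarRing R] (hR : HasProperInvolution R) {a e : R} (he : IsStarProjection e)
    (hae : star a * a * e = star a * a) : a * e = a := by
  have hea : e * (star a * a) = star a * a := by
    simpa [mul_assoc, he.isSelfAdjoint.star_eq] using congrArg star hae
  have hdefect : star (a - a * e) * (a - a * e) =
      star a * a - star a * a * e - e * (star a * a) + e * (star a * a) * e := by
    rw [star_sub, star_mul, he.isSelfAdjoint.star_eq]
    noncomm_ring
  refine (sub_eq_zero.1 (hR _ ?_)).symm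
  rw [hdefect, hea, hae]
  abel

theorem Polynomial.exists_isIdempotentElem_aeval_X_mul {K R : Type*} [CommRing K] [Ring R]
    [Algebra K R] {x : R} {g : K[X]} (hg : aeval x (X * g) = 0) (hcop : IsCoprime X g) :
    ∃ u : K[X], IsIdempotentElem (aeval x (X * u)) ∧ x * aeval x (X * u) = x := by
  obtain ⟨u, v, huv⟩ := hcop
  have hx : x * aeval x (v * g) = 0 := by
    calc x * aeval x (v * g) = aeval x (X * (v * g)) := by simp only [map_mul, aeval_X]
      _ = 0 := by rw [mul_left_comm, map_mul, hg, mul_zero]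
  have he : aeval x (X * u) = 1 - aeval x (v * g) := by
    rw [eq_sub_iff_add_eq, ← map_add, mul_comm, huv, map_one]
  refine ⟨u, ?_, by rw [he, mul_sub, mul_one, hx, sub_zero]⟩
  have het : aeval x (X * u) * aeval x (v * g) = 0 := by
    rw [← map_mul, show X * u * (v * g) = u * v * (X * g) by ring, map_mul, hg, mul_zero]
  rw [IsIdempotentElem]
  nth_rw 2 [he]
  rw [mul_sub, mul_one, het, sub_zero]

section StarAlgebra

variable {K R : Type*} [Field K] [StarRing K] [Ring R] [StarRing R] [Algebra K R]
  [StarModule K R] {H : R}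

theorem IsSelfAdjoint.star_aeval (hH : IsSelfAdjoint H) (p : K[X]) :
    star (aeval H p) = aeval H (p.map (starRingEnd K)) := by
  induction p using Polynomial.induction_on' with
  | add p q hp hq => rw [map_add, star_add, hp, hq, Polynomial.map_add, map_add]
  | monomial n c =>
    rw [Polynomial.map_monomial, aeval_monomial, aeval_monomial, star_mul, star_pow,
      hH.star_eq, starRingEnd_apply, ← algebraMap_star_comm]
    exact (Algebra.commutes _ _).symm

theorem IsSelfAdjoint.not_X_sq_dvd_minpoly (hR : HasProperInvolution R) (hH : IsSelfAdjoint H)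
    (hint : IsIntegral K H) : ¬ X ^ 2 ∣ minpoly K H := by
  rintro ⟨w, hw⟩
  have hw0 : w ≠ 0 := by
    rintro rfl
    exact minpoly.ne_zero hint (by rw [hw, mul_zero])
  have hXw : aeval H (X * w) = 0 := by
    refine hR _ ?_
    have hfac : (X * w).map (starRingEnd K) * (X * w) = minpoly K H * w.map (starRingEnd K) := by
      rw [hw, Polynomial.map_mul, map_X]
      ring
    rw [hH.star_aeval, ← map_mul, hfac, map_mul, minpoly.aeval, zero_mul]
  have hdeg := natDegree_le_of_dvd (minpoly.dvd K H hXw) (mul_ne_zero X_ne_zero hw0)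
  rw [hw, natDegree_mul (pow_ne_zero 2 X_ne_zero) hw0, natDegree_mul X_ne_zero hw0,
    natDegree_X_pow, natDegree_X] at hdeg
  omega

theorem IsSelfAdjoint.exists_isStarProjection_aeval_X_mul (hR : HasProperInvolution R)
    (hH : IsSelfAdjoint H) (hint : IsIntegral K H) (hX : X ∣ minpoly K H) :
    ∃ v : K[X], IsStarProjection (aeval H (X * v)) ∧ H * aeval H (X * v) = H := by
  obtain ⟨g, hg⟩ := hX
  have hcop : IsCoprime X g := prime_X.coprime_iff_not_dvd.2 fun hXg =>
    hH.not_X_sq_dvd_minpoly hR hint (hg ▸ pow_two (X : K[X]) ▸ mul_dvd_mul_left X hXg)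
  obtain ⟨u, hidem, hHe⟩ := exists_isIdempotentElem_aeval_X_mul (hg ▸ minpoly.aeval K H) hcop
  set e := aeval H (X * u) with he
  have hcomm : Commute e H := by
    simpa only [aeval_X] using (Commute.all (X * u : K[X]) X).map (aeval H)
  have hstar_comm : Commute (star e) e := by
    rw [he, hH.star_aeval]
    exact (Commute.all _ _).map (aeval H)
  have hHstar : H * star e = H :=
    calc H * star e = star (e * H) := by rw [star_mul, hH.star_eq]
      _ = H := by rw [hcomm.eq, hHe, hH.star_eq]
  have hE : star e * e = aeval H (X * (u.map (starRingEnd K) * X * u)) := by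
    rw [he, hH.star_aeval, ← map_mul, Polynomial.map_mul, map_X]
    congr 1
    ring
  refine ⟨u.map (starRingEnd K) * X * u, ?_, ?_⟩ <;> rw [← hE]
  · exact ⟨hidem.star.mul_of_commute hstar_comm hidem, .star_mul_self e⟩
  · rw [← mul_assoc, hHstar, hHe]

end StarAlgebra

/-- An algebraic complex `*`-algebra with proper involution is a weakly
Rickart `*`-ring: every `a` admits a projection `e` with `a * e = a` and `a * y = 0 →
e * y = 0`. -/
theorem weaklyRickart_of_properInvolution (A : Type*) [NonUnitalRing A] [Module ℂ A]
    [SMulCommClass ℂ A A] [IsScalarTower ℂ A A] [StarRing A] [StarModule ℂ A]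
    (halg : IsAlgebraicAlgebra A) (hproper : HasProperInvolution A) :
    ∀ a : A, ∃ e : A, star e = e ∧ e * e = e ∧ a * e = a ∧ ∀ y : A, a * y = 0 → e * y = 0 := by
  intro a
  set H : Unitization ℂ A := ↑(star a * a)
  have hH : IsSelfAdjoint H := by rw [IsSelfAdjoint, ← Unitization.inr_star, star_mul, star_star]
  obtain ⟨S, hS, _⟩ := halg (star a * a)
  have hproperU : HasProperInvolution (Unitization ℂ A) :=
    Unitization.hasProperInvolution (fun z hz => (mul_eq_zero.1 hz).elim star_eq_zero.1 id) hproper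
  obtain ⟨v, hproj, hHE⟩ := hH.exists_isStarProjection_aeval_X_mul hproperU
    (Unitization.isIntegral_inr hS) (Unitization.X_dvd_minpoly_inr _)
  have hfst : (aeval H (X * v)).fst = 0 := by
    rw [Unitization.fst_aeval_inr, mul_coeff_zero, coeff_X_zero, zero_mul]
  lift aeval H (X * v) to A using hfst with e he
  rw [Unitization.isStarProjection_inr_iff] at hproj
  have hae : star a * a * e = star a * a :=
    Unitization.inr_injective (R := ℂ) (by rw [Unitization.inr_mul, hHE])
  refine ⟨e, hproj.isSelfAdjoint.star_eq, hproj.isIdempotentElem.eq,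
    hproper.mul_eq_self_of_star_mul_self_mul hproj hae, fun y hy => ?_⟩
  apply Unitization.inr_injective (R := ℂ)
  rw [Unitization.inr_mul, he, mul_comm X v, map_mul, aeval_X, mul_assoc, ← Unitization.inr_mul,
    mul_assoc, hy, mul_zero, Unitization.inr_zero, mul_zero]
end

section
/- Let A be a complex *-algebra that is algebraic and admits a pre-C*-norm. Then A equals the ℂ-linear span of its projections. -/
open Polynomial

theorem HasPreCstarNorm.hasProperInvolution {A : Type*} [NonUnitalRing A] [Module ℂ A] [Star A]
    (hA : HasPreCstarNorm A) : HasProperInvolution A := by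
  obtain ⟨σ, hσ0, -, -, -, hσstar⟩ := hA
  intro a ha
  have : σ a ^ 2 = 0 := by rw [← hσstar, ha, (hσ0 0).2 rfl]
  exact (hσ0 a).1 (pow_eq_zero_iff two_ne_zero |>.1 this)

theorem HasProperInvolution.eq_zero_of_mul_self_eq_zero {A : Type*} [NonUnitalRing A] [StarRing A]
    (hA : HasProperInvolution A) {n : A} (hn : Commute (star n) n) (h : n * n = 0) : n = 0 := by
  have hs : star (star n * n) * (star n * n) = 0 := by
    rw [star_mul, star_star, mul_assoc, ← mul_assoc n, ← hn.eq, mul_assoc, h,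
      mul_zero, mul_zero]
  exact hA n (hA _ hs)

theorem HasProperInvolution.conj_eq_of_mul_eq_smul {A : Type*} [NonUnitalRing A] [Module ℂ A]
    [SMulCommClass ℂ A A] [IsScalarTower ℂ A A] [StarRing A] [StarModule ℂ A]
    (hA : HasProperInvolution A) {h y : A} (hh : IsSelfAdjoint h) (hy : y ≠ 0) {μ : ℂ}
    (hμ : h * y = μ • y) : starRingEnd ℂ μ = μ := by
  have hyh : star y * h = star μ • star y := by rw [← hh.star_eq, ← star_mul, hμ, star_smul]
  have : (μ - star μ) • (star y * y) = 0 := by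
    rw [sub_smul, ← mul_smul_comm, ← hμ, ← smul_mul_assoc, ← hyh, mul_assoc, sub_self]
  rcases smul_eq_zero.1 this with h0 | h0
  · exact (sub_eq_zero.1 h0).symm
  · exact absurd (hA y h0) hy

theorem IsSelfAdjoint.star_aeval_s9 {R B : Type*} [CommSemiring R] [StarRing R] [Semiring B]
    [StarRing B] [Algebra R B] [StarModule R B] {x : B} (hx : IsSelfAdjoint x) (p : R[X]) :
    star (aeval x p) = aeval x (p.map (starRingEnd R)) := by
  induction p using Polynomial.induction_on' with
  | add p q hp hq => rw [map_add, star_add, hp, hq, Polynomial.map_add, map_add]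
  | monomial n c =>
      rw [aeval_monomial, Polynomial.map_monomial, aeval_monomial, star_mul, star_pow, hx.star_eq,
        ← algebraMap_star_comm, Algebra.commutes, starRingEnd_apply]

section Unitization

variable {R A : Type*} [CommRing R] [NonUnitalRing A] [Module R A] [SMulCommClass R A A]
  [IsScalarTower R A A]

theorem Unitization.fst_aeval_inr_s9 (a : A) (p : R[X]) :
    (aeval (a : Unitization R A) p).fst = p.eval 0 := by
  rw [← Unitization.fstHom_apply, ← aeval_algHom_apply, Unitization.fstHom_apply,
    Unitization.fst_inr, ← coeff_zero_eq_aeval_zero, coeff_zero_eq_eval_zero]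

theorem Unitization.inr_snd_aeval_inr (a : A) {p : R[X]} (hp : p.eval 0 = 0) :
    ((aeval (a : Unitization R A) p).snd : Unitization R A) = aeval (a : Unitization R A) p :=
  Unitization.ext (by rw [Unitization.fst_inr, Unitization.fst_aeval_inr_s9, hp]) rfl

end Unitization

theorem IsAlgebraicAlgebra.isIntegral_inr {A : Type*} [NonUnitalRing A] [Module ℂ A]
    [SMulCommClass ℂ A A] [IsScalarTower ℂ A A] (halg : IsAlgebraicAlgebra A) (a : A) :
    IsIntegral ℂ (a : Unitization ℂ A) := by
  obtain ⟨S, haS, hS⟩ := halg a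
  have : Module.Finite ℂ (Unitization ℂ S) :=
    Module.Finite.equiv (Unitization.linearEquiv ℂ ℂ S).symm
  have := (IsIntegral.of_finite ℂ ((⟨a, haS⟩ : S) : Unitization ℂ S)).map
    (Unitization.lift
      ((Unitization.inrNonUnitalAlgHom ℂ A).comp (NonUnitalSubalgebraClass.subtype S)))
  simpa using this

theorem Lagrange.eval_basis_id {K : Type*} [Field K] [DecidableEq K] {s : Finset K} {μ ν : K}
    (hν : ν ∈ s) :
    (Lagrange.basis s id μ).eval ν = if ν = μ then 1 else 0 := by
  split_ifs with h
  · subst h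
    exact Lagrange.eval_basis_self (v := @id K) (Set.injOn_id _) hν
  · exact Lagrange.eval_basis_of_ne (v := @id K) (Ne.symm h) hν

section SpectralIdempotent

variable {K B : Type*} [Field K] [DecidableEq K] [Ring B] [Algebra K B]

variable (K) in
noncomputable def spectralIdempotent (x : B) (μ : K) : B :=
  aeval x (Lagrange.basis (minpoly K x).roots.toFinset id μ)

variable [IsAlgClosed K] {x : B} (hx : IsIntegral K x) (hsf : Squarefree (minpoly K x))
include hx hsf

theorem aeval_eq_aeval_iff_of_squarefree_minpoly {p q : K[X]} :
    aeval x p = aeval x q ↔ ∀ μ ∈ (minpoly K x).roots, p.eval μ = q.eval μ := by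
  have hnodup := nodup_roots (PerfectField.separable_iff_squarefree.2 hsf)
  rw [← sub_eq_zero, ← map_sub, ← minpoly.dvd_iff]
  simp_rw [← sub_eq_zero (a := p.eval _), ← eval_sub]
  refine ⟨fun hd μ hμ => eval_eq_zero_of_dvd_of_eval_eq_zero hd (isRoot_of_mem_roots hμ),
    fun h => ?_⟩
  by_cases h0 : p - q = 0
  · rw [h0]
    exact dvd_zero _
  exact (IsAlgClosed.splits _).dvd_of_roots_le_roots (minpoly.ne_zero hx)
    ((Multiset.le_iff_subset hnodup).2 fun μ hμ => (mem_roots h0).2 (h μ hμ))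

theorem spectralIdempotent_mul_self (μ : K) :
    spectralIdempotent K x μ * spectralIdempotent K x μ = spectralIdempotent K x μ := by
  rw [spectralIdempotent, ← map_mul, aeval_eq_aeval_iff_of_squarefree_minpoly hx hsf]
  intro ν hν
  rw [eval_mul, Lagrange.eval_basis_id (Multiset.mem_toFinset.2 hν)]
  split_ifs <;> simp

theorem mul_spectralIdempotent (μ : K) :
    x * spectralIdempotent K x μ = μ • spectralIdempotent K x μ := by
  rw [spectralIdempotent, Algebra.smul_def, ← aeval_C, ← map_mul]
  nth_rewrite 1 [← aeval_X (R := K) x]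
  rw [← map_mul, aeval_eq_aeval_iff_of_squarefree_minpoly hx hsf]
  intro ν hν
  rw [eval_mul, eval_mul, eval_X, eval_C, Lagrange.eval_basis_id (Multiset.mem_toFinset.2 hν)]
  split_ifs with h <;> simp [h]

theorem spectralIdempotent_ne_zero {μ : K} (hμ : μ ∈ (minpoly K x).roots) :
    spectralIdempotent K x μ ≠ 0 := by
  rw [spectralIdempotent, ← map_zero (aeval (R := K) x), Ne,
    aeval_eq_aeval_iff_of_squarefree_minpoly hx hsf]
  push Not
  exact ⟨μ, hμ, by simp [Lagrange.eval_basis_id (Multiset.mem_toFinset.2 hμ)]⟩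

theorem sum_smul_spectralIdempotent :
    ∑ μ ∈ (minpoly K x).roots.toFinset, μ • spectralIdempotent K x μ = x := by
  have hinterp : ∑ μ ∈ (minpoly K x).roots.toFinset, μ • spectralIdempotent K x μ =
      aeval x (Lagrange.interpolate (minpoly K x).roots.toFinset id id) := by
    simp [spectralIdempotent, Algebra.smul_def]
  conv_rhs => rw [← aeval_X (R := K) x]
  rw [hinterp, aeval_eq_aeval_iff_of_squarefree_minpoly hx hsf]
  intro ν hν
  rw [eval_X]
  exact Lagrange.eval_interpolate_at_node (r := id) (Set.injOn_id _) (Multiset.mem_toFinset.2 hν)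

end SpectralIdempotent

theorem isStarProjection_spectralIdempotent {B : Type*} [Ring B] [Algebra ℂ B] [StarRing B]
    [StarModule ℂ B] {x : B} (hx : IsIntegral ℂ x) (hsf : Squarefree (minpoly ℂ x))
    (hxsa : IsSelfAdjoint x) (hreal : ∀ ν ∈ (minpoly ℂ x).roots, starRingEnd ℂ ν = ν) (μ : ℂ) :
    IsStarProjection (spectralIdempotent ℂ x μ) := by
  refine ⟨spectralIdempotent_mul_self hx hsf μ, ?_⟩
  rw [IsSelfAdjoint, spectralIdempotent, hxsa.star_aeval_s9,
    aeval_eq_aeval_iff_of_squarefree_minpoly hx hsf]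
  intro ν hν
  rw [eval_map, ← hreal ν hν, eval₂_at_apply, hreal ν hν,
    Lagrange.eval_basis_id (Multiset.mem_toFinset.2 hν)]
  split_ifs <;> simp

section UnitizationSpectral

variable {K A : Type*} [Field K] [NonUnitalRing A] [Module K A] [SMulCommClass K A A]
  [IsScalarTower K A A]

theorem Unitization.zero_mem_roots_minpoly_inr {a : A} (ha : IsIntegral K (a : Unitization K A)) :
    (0 : K) ∈ (minpoly K (a : Unitization K A)).roots := by
  rw [mem_roots (minpoly.ne_zero ha), IsRoot, ← Unitization.fst_aeval_inr_s9 a, minpoly.aeval,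
    Unitization.fst_zero]

theorem Unitization.inr_snd_spectralIdempotent_inr [DecidableEq K] {a : A}
    (ha : IsIntegral K (a : Unitization K A)) {μ : K} (hμ : μ ≠ 0) :
    ((spectralIdempotent K (a : Unitization K A) μ).snd : Unitization K A) =
      spectralIdempotent K (a : Unitization K A) μ :=
  Unitization.inr_snd_aeval_inr a <| by
    rw [Lagrange.eval_basis_id (Multiset.mem_toFinset.2 (zero_mem_roots_minpoly_inr ha)),
      if_neg hμ.symm]

end UnitizationSpectral

namespace HasProperInvolution

variable {A : Type*} [NonUnitalRing A] [Module ℂ A] [SMulCommClass ℂ A A] [IsScalarTower ℂ A A]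
  [StarRing A] [StarModule ℂ A] (hA : HasProperInvolution A)
include hA

section SelfAdjoint

variable {h : A} (hh : IsSelfAdjoint h) (hint : IsIntegral ℂ (h : Unitization ℂ A))
include hh hint

theorem squarefree_minpoly_inr : Squarefree (minpoly ℂ (h : Unitization ℂ A)) := by
  set x : Unitization ℂ A := (h : Unitization ℂ A)
  have hxsa : IsSelfAdjoint x := hh.map (Unitization.inrNonUnitalStarAlgHom ℂ A)
  rintro d ⟨c, hc⟩
  have hdc : d * c ≠ 0 := fun h0 => minpoly.ne_zero hint (by rw [hc, mul_assoc, h0, mul_zero])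
  have hdc0 : (d * c).eval 0 = 0 := by
    have hm0 := (mem_roots (minpoly.ne_zero hint)).1 (Unitization.zero_mem_roots_minpoly_inr hint)
    rw [IsRoot, hc, eval_mul, eval_mul] at hm0
    rw [eval_mul]
    rcases mul_eq_zero.1 hm0 with hd0 | hc0
    · rw [mul_self_eq_zero.1 hd0, zero_mul]
    · rw [hc0, mul_zero]
  set n : A := (aeval x (d * c)).snd
  have hn : (n : Unitization ℂ A) = aeval x (d * c) := Unitization.inr_snd_aeval_inr h hdc0
  have hcomm : Commute (star n) n := by
    apply Unitization.inr_injective (R := ℂ)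
    rw [Unitization.inr_mul, Unitization.inr_mul, Unitization.inr_star, hn, hxsa.star_aeval_s9,
      ← map_mul, ← map_mul, mul_comm]
  have hsq : n * n = 0 := by
    apply Unitization.inr_injective (R := ℂ)
    rw [Unitization.inr_mul, hn, ← map_mul, Unitization.inr_zero, ← minpoly.dvd_iff]
    exact ⟨c, by rw [hc]; ring⟩
  have hdvd : minpoly ℂ x ∣ d * c := by
    rw [minpoly.dvd_iff, ← hn, hA.eq_zero_of_mul_self_eq_zero hcomm hsq, Unitization.inr_zero]
  rw [hc, mul_assoc] at hdvd
  exact isUnit_of_dvd_one ((mul_dvd_mul_iff_right hdc).1 (by rwa [one_mul]))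

theorem conj_eq_of_mem_roots_minpoly_inr {μ : ℂ}
    (hμ : μ ∈ (minpoly ℂ (h : Unitization ℂ A)).roots) : starRingEnd ℂ μ = μ := by
  rcases eq_or_ne μ 0 with rfl | hμ0
  · exact map_zero _
  have hsf := hA.squarefree_minpoly_inr hh hint
  set y : A := (spectralIdempotent ℂ (h : Unitization ℂ A) μ).snd
  have hy : (y : Unitization ℂ A) = spectralIdempotent ℂ (h : Unitization ℂ A) μ :=
    Unitization.inr_snd_spectralIdempotent_inr hint hμ0
  refine hA.conj_eq_of_mul_eq_smul hh (y := y) (fun hy0 => ?_) ?_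
  · apply spectralIdempotent_ne_zero hint hsf hμ
    rw [← hy, hy0, Unitization.inr_zero]
  · apply Unitization.inr_injective (R := ℂ)
    rw [Unitization.inr_mul, Unitization.inr_smul, hy, mul_spectralIdempotent hint hsf]

theorem mem_span_projections : h ∈ Submodule.span ℂ {e : A | star e = e ∧ e * e = e} := by
  set x : Unitization ℂ A := (h : Unitization ℂ A)
  have hsf := hA.squarefree_minpoly_inr hh hint
  set E : ℂ → A := fun μ => (spectralIdempotent ℂ x μ).snd
  have hE : ∀ μ ≠ 0, (E μ : Unitization ℂ A) = spectralIdempotent ℂ x μ :=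
    fun μ hμ => Unitization.inr_snd_spectralIdempotent_inr hint hμ
  have hdecomp : h = ∑ μ ∈ (minpoly ℂ x).roots.toFinset.erase 0, μ • E μ := by
    apply Unitization.inr_injective (R := ℂ)
    calc x = ∑ μ ∈ (minpoly ℂ x).roots.toFinset, μ • spectralIdempotent ℂ x μ :=
          (sum_smul_spectralIdempotent hint hsf).symm
      _ = ∑ μ ∈ (minpoly ℂ x).roots.toFinset.erase 0, μ • spectralIdempotent ℂ x μ :=
          (Finset.sum_erase (f := fun μ => μ • spectralIdempotent ℂ x μ) _ (zero_smul ℂ _)).symm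
      _ = ∑ μ ∈ (minpoly ℂ x).roots.toFinset.erase 0, ((μ • E μ : A) : Unitization ℂ A) :=
          Finset.sum_congr rfl fun μ hμ => by
            rw [Unitization.inr_smul, hE μ (Finset.ne_of_mem_erase hμ)]
      _ = _ := (map_sum (Unitization.inrNonUnitalAlgHom ℂ A) _ _).symm
  rw [hdecomp]
  refine Submodule.sum_mem _ fun μ hμ => Submodule.smul_mem _ _ (Submodule.subset_span ?_)
  have hp : IsStarProjection (E μ : Unitization ℂ A) := by
    rw [hE μ (Finset.ne_of_mem_erase hμ)]
    exact isStarProjection_spectralIdempotent hint hsf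
      (hh.map (Unitization.inrNonUnitalStarAlgHom ℂ A))
      (fun ν hν => hA.conj_eq_of_mem_roots_minpoly_inr hh hint hν) μ
  exact ⟨hp.of_inr.isSelfAdjoint, hp.of_inr.isIdempotentElem⟩

end SelfAdjoint

theorem span_projections_eq_top (halg : IsAlgebraicAlgebra A) :
    Submodule.span ℂ {e : A | star e = e ∧ e * e = e} = ⊤ := by
  refine eq_top_iff.2 fun a _ => ?_
  have hsa (b : selfAdjoint A) : (b : A) ∈ Submodule.span ℂ {e : A | star e = e ∧ e * e = e} :=
    hA.mem_span_projections b.2 (halg.isIntegral_inr b)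
  rw [← realPart_add_I_smul_imaginaryPart a]
  exact add_mem (hsa _) (Submodule.smul_mem _ _ (hsa _))

end HasProperInvolution

/-- An algebraic complex `*`-algebra with a pre-C*-norm is the ℂ-linear
span of its projections. -/
theorem span_projections_eq_top_of_algebraic_preCstarNorm (A : Type*) [NonUnitalRing A]
    [Module ℂ A] [SMulCommClass ℂ A A] [IsScalarTower ℂ A A] [StarRing A] [StarModule ℂ A]
    (halg : IsAlgebraicAlgebra A) (hnorm : HasPreCstarNorm A) :
    Submodule.span ℂ {e : A | star e = e ∧ e * e = e} = ⊤ :=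
  hnorm.hasProperInvolution.span_projections_eq_top halg
end
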